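/- Abstraction soundness for bounded reachability (core of the soundness theorem): let (S, P) be a finite DTMC, h : S → Ŝ a surjective abstraction function, and B ⊆ S an h-saturated target set with abstract target B̂ = h(B). Let minreach and maxreach be the value-iteration sequences of the induced abstract MDP with target B̂. Then for every n ∈ ℕ and every s ∈ S, minreach n (h s) ≤ reach n s ≤ maxreach n (h s), where reach is the n-step reachability of B in the concrete DTMC. -/

import Mathlib

open scoped Classical

/-- Concretization of an abstract state: `γ(t) = h⁻¹({t})`, as a finset. -/
noncomputable def gammaSet {S T : Type*} [Fintype S] (h : S → T) (t : T) : Finset S :=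
  Finset.univ.filter fun s => h s = t

/-- The concretization of every abstract state is nonempty when `h` is surjective. -/
theorem gammaSet_nonempty {S T : Type*} [Fintype S] (h : S → T)
    (hsurj : Function.Surjective h) (t : T) : (gammaSet h t).Nonempty := by
  obtain ⟨s, hs⟩ := hsurj t
  exact ⟨s, by simp [gammaSet, hs]⟩

/-- Abstract transition function of the induced abstract MDP:
`P̂ ŝ α ŝ' = ∑_{s' ∈ γ(ŝ')} P α s'` (independent of the abstract source state). -/
noncomputable def absP {S T : Type*} [Fintype S] (P : S → S → ℝ) (h : S → T)
    (α : S) (t' : T) : ℝ :=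
  ∑ s' ∈ gammaSet h t', P α s'

/-- Minimum value iteration of the induced abstract MDP (state space `T`, actions
`S`, enabled actions `Act(t) = γ(t)`) for an abstract target set `Bh`. -/
noncomputable def absMinReach {S T : Type*} [Fintype S] [Fintype T]
    (P : S → S → ℝ) (h : S → T) (hsurj : Function.Surjective h) (Bh : Set T) :
    ℕ → T → ℝ
  | 0, t => if t ∈ Bh then 1 else 0
  | n + 1, t =>
      if t ∈ Bh then 1
      else (gammaSet h t).inf' (gammaSet_nonempty h hsurj t) fun α =>
        ∑ t' : T, absP P h α t' * absMinReach P h hsurj Bh n t'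

/-- Maximum value iteration of the induced abstract MDP for target `Bh`. -/
noncomputable def absMaxReach {S T : Type*} [Fintype S] [Fintype T]
    (P : S → S → ℝ) (h : S → T) (hsurj : Function.Surjective h) (Bh : Set T) :
    ℕ → T → ℝ
  | 0, t => if t ∈ Bh then 1 else 0
  | n + 1, t =>
      if t ∈ Bh then 1
      else (gammaSet h t).sup' (gammaSet_nonempty h hsurj t) fun α =>
        ∑ t' : T, absP P h α t' * absMaxReach P h hsurj Bh n t'

/-- n-step reachability values of a target set `B` in the concrete DTMC. -/
noncomputable def reachN {S : Type*} [Fintype S] (P : S → S → ℝ) (B : Set S) :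
    ℕ → S → ℝ
  | 0, s => if s ∈ B then 1 else 0
  | n + 1, s => if s ∈ B then 1 else ∑ s' : S, P s s' * reachN P B n s'


/-! Choosing the concrete state `s` itself as the action at `h s` makes one abstract step
coincide with one concrete step, because abstract successors are summed fiberwise and a
saturated target is recognised through `h`; the minimum and the maximum over all enabled
actions therefore bracket the concrete value, level by level. -/

theorem mem_gammaSet_self {S T : Type*} [Fintype S] (h : S → T) (s : S) :
    s ∈ gammaSet h (h s) := by
  simp [gammaSet]

theorem sum_absP_mul {S T : Type*} [Fintype S] [Fintype T] (P : S → S → ℝ) (h : S → T)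
    (α : S) (g : T → ℝ) :
    ∑ t : T, absP P h α t * g t = ∑ s : S, P α s * g (h s) := by
  simp only [absP, gammaSet, Finset.sum_mul]
  rw [← Finset.sum_fiberwise Finset.univ h fun s => P α s * g (h s)]
  refine Finset.sum_congr rfl fun t _ => Finset.sum_congr rfl fun s hs => ?_
  rw [(Finset.mem_filter.1 hs).2]

theorem mem_image_iff_of_saturated {S T : Type*} {h : S → T} {B : Set S}
    (hsat : B = h ⁻¹' (h '' B)) (s : S) : h s ∈ h '' B ↔ s ∈ B := by
  conv_rhs => rw [hsat]
  rfl

section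

variable {S T : Type*} [Fintype S] [Fintype T] {P : S → S → ℝ} {h : S → T}
  (hsurj : Function.Surjective h) {B : Set S}

theorem absMinReach_le_reachN (hP : ∀ s s' : S, 0 ≤ P s s') (hsat : B = h ⁻¹' (h '' B))
    (n : ℕ) (s : S) : absMinReach P h hsurj (h '' B) n (h s) ≤ reachN P B n s := by
  induction n generalizing s with
  | zero => simp [absMinReach, reachN, mem_image_iff_of_saturated hsat]
  | succ n ih =>
    by_cases hs : s ∈ B
    · simp [absMinReach, reachN, hs, (mem_image_iff_of_saturated hsat s).2 hs]
    · have hs' : h s ∉ h '' B := (mem_image_iff_of_saturated hsat s).not.2 hs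
      simp only [absMinReach, reachN, hs, hs', if_false]
      calc _ ≤ ∑ t : T, absP P h s t * absMinReach P h hsurj (h '' B) n t :=
            Finset.inf'_le _ (mem_gammaSet_self h s)
        _ = ∑ s' : S, P s s' * absMinReach P h hsurj (h '' B) n (h s') := sum_absP_mul ..
        _ ≤ ∑ s' : S, P s s' * reachN P B n s' := by
            gcongr with s'
            · exact hP s s'
            · exact ih s'

theorem reachN_le_absMaxReach (hP : ∀ s s' : S, 0 ≤ P s s') (hsat : B = h ⁻¹' (h '' B))
    (n : ℕ) (s : S) : reachN P B n s ≤ absMaxReach P h hsurj (h '' B) n (h s) := by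
  induction n generalizing s with
  | zero => simp [absMaxReach, reachN, mem_image_iff_of_saturated hsat]
  | succ n ih =>
    by_cases hs : s ∈ B
    · simp [absMaxReach, reachN, hs, (mem_image_iff_of_saturated hsat s).2 hs]
    · have hs' : h s ∉ h '' B := (mem_image_iff_of_saturated hsat s).not.2 hs
      simp only [absMaxReach, reachN, hs, hs', if_false]
      calc ∑ s' : S, P s s' * reachN P B n s'
          ≤ ∑ s' : S, P s s' * absMaxReach P h hsurj (h '' B) n (h s') := by
            gcongr with s'
            · exact hP s s'
            · exact ih s'
        _ = ∑ t : T, absP P h s t * absMaxReach P h hsurj (h '' B) n t := (sum_absP_mul ..).symm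
        _ ≤ _ := Finset.le_sup'_of_le _ (mem_gammaSet_self h s) le_rfl

end

theorem abstraction_sound_bounded_reach_general {S T : Type*}
    [Fintype S] [Fintype T]
    (P : S → S → ℝ)
    (hP : ∀ s s' : S, 0 ≤ P s s')
    (h : S → T) (hsurj : Function.Surjective h)
    (B : Set S) (hsat : B = h ⁻¹' (h '' B)) :
    ∀ (n : ℕ) (s : S),
      absMinReach P h hsurj (h '' B) n (h s) ≤ reachN P B n s ∧
      reachN P B n s ≤ absMaxReach P h hsurj (h '' B) n (h s) :=
  fun n s => ⟨absMinReach_le_reachN hsurj hP hsat n s, reachN_le_absMaxReach hsurj hP hsat n s⟩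

/-- Abstraction soundness for bounded reachability: let (S, P) be a
finite DTMC, h : S → Ŝ a surjective abstraction function, and B ⊆ S an h-saturated
target set with abstract target B̂ = h(B). Then for every n and every concrete
state s, `minreach n (h s) ≤ reach n s ≤ maxreach n (h s)`. -/
theorem abstraction_sound_bounded_reach {S T : Type*}
    [Fintype S] [Nonempty S] [Fintype T]
    (P : S → S → ℝ)
    (hP : ∀ s s' : S, 0 ≤ P s s')
    (hsum : ∀ s : S, ∑ s' : S, P s s' = 1)
    (h : S → T) (hsurj : Function.Surjective h)
    (B : Set S) (hsat : B = h ⁻¹' (h '' B)) :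
    ∀ (n : ℕ) (s : S),
      absMinReach P h hsurj (h '' B) n (h s) ≤ reachN P B n s ∧
      reachN P B n s ≤ absMaxReach P h hsurj (h '' B) n (h s) :=
  abstraction_sound_bounded_reach_general P hP h hsurj B hsat
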